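/- arXiv:2011.04059 — 9 statements merged into one kernel-verified Lean document; each statement's English description precedes it below -/
import Mathlib

section
/- Let V be a finite-dimensional real vector space and let L_1, …, L_m be subspaces of V satisfying dim(span(⋃_{i∈α} L_i)) ≥ |α| + 1 for every nonempty α ⊆ {1,…,m}. Call α ⊆ {1,…,m} critical if dim(span(⋃_{i∈α} L_i)) = |α| + 1. If α and α' are critical sets with α ∩ α' ≠ ∅, then α ∪ α' is a critical set. -/
/-- Panov's lemma: if `L₁,…,L_m` are subspaces of a finite-dimensional real vector space
satisfying the criticality condition `dim L_α ≥ |α| + 1` for all nonempty `α`, and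
`α, α'` are critical sets (`dim L_α = |α| + 1`) with nonempty intersection, then
`α ∪ α'` is a critical set. -/
theorem stmt1 {V : Type*} [AddCommGroup V] [Module ℝ V] [FiniteDimensional ℝ V]
    {m : ℕ} (L : Fin m → Submodule ℝ V)
    (hcrit : ∀ α : Finset (Fin m), α.Nonempty →
      α.card + 1 ≤ Module.finrank ℝ ↥(⨆ i ∈ α, L i))
    (α α' : Finset (Fin m))
    (hα : Module.finrank ℝ ↥(⨆ i ∈ α, L i) = α.card + 1)
    (hα' : Module.finrank ℝ ↥(⨆ i ∈ α', L i) = α'.card + 1)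
    (hint : (α ∩ α').Nonempty) :
    Module.finrank ℝ ↥(⨆ i ∈ α ∪ α', L i) = (α ∪ α').card + 1 := by
  set A := ⨆ i ∈ α, L i
  set B := ⨆ i ∈ α', L i
  have hsup : (⨆ i ∈ α ∪ α', L i) = A ⊔ B := by
    simp only [A, B, Finset.mem_union, iSup_or, iSup_sup_eq]
  have hunion : (α ∪ α').Nonempty := hint.mono (Finset.inter_subset_left.trans Finset.subset_union_left)
  have hle : (α ∪ α').card + 1 ≤ Module.finrank ℝ ↥(⨆ i ∈ α ∪ α', L i) :=
    hcrit _ hunion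
  have hinf_le : (⨆ i ∈ α ∩ α', L i) ≤ A ⊓ B := by
    refine le_inf ?_ ?_ <;>
      exact iSup₂_le fun i hi => le_iSup₂ (f := fun i _ => L i) i (by
        simp only [Finset.mem_inter] at hi; tauto)
  have hinf : (α ∩ α').card + 1 ≤ Module.finrank ℝ ↥(A ⊓ B) :=
    (hcrit _ hint).trans (Submodule.finrank_mono hinf_le)
  have hkey : Module.finrank ℝ ↥(A ⊔ B) + Module.finrank ℝ ↥(A ⊓ B)
      = Module.finrank ℝ ↥A + Module.finrank ℝ ↥B :=
    Submodule.finrank_sup_add_finrank_inf_eq A B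
  rw [hsup] at hle ⊢
  have hc : α.card + α'.card = (α ∪ α').card + (α ∩ α').card :=
    (Finset.card_union_add_card_inter α α').symm
  omega
end

section
/- Let V be a finite-dimensional real vector space and let L_1, …, L_m be subspaces of V with dim L_α ≥ |α| + 1 for every nonempty α ⊆ {1,…,m}, where L_α := Σ_{i∈α} L_i. Call α critical if dim L_α = |α| + 1, and maximal if it is critical and contained in no strictly larger critical set. If α ≠ α' are both maximal, then α ∩ α' = ∅ and L_α ∩ L_{α'} = {0}. -/
/-- `α` is a critical set for the collection `L` of subspaces. -/
def critSet {V : Type*} [AddCommGroup V] [Module ℝ V] {m : ℕ}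
    (L : Fin m → Submodule ℝ V) (α : Finset (Fin m)) : Prop :=
  Module.finrank ℝ ↥(⨆ i ∈ α, L i) = α.card + 1

/-- `α` is a maximal (critical) set: critical and contained in no strictly larger
critical set. -/
def maxSet {V : Type*} [AddCommGroup V] [Module ℝ V] {m : ℕ}
    (L : Fin m → Submodule ℝ V) (α : Finset (Fin m)) : Prop :=
  critSet L α ∧ ∀ β : Finset (Fin m), critSet L β → ¬ α ⊂ β

/-- Distinct maximal sets of a critical collection of subspaces are disjoint, and the
corresponding subspaces intersect trivially. -/
theorem stmt2 {V : Type*} [AddCommGroup V] [Module ℝ V] [FiniteDimensional ℝ V]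
    {m : ℕ} (L : Fin m → Submodule ℝ V)
    (hcrit : ∀ α : Finset (Fin m), α.Nonempty →
      α.card + 1 ≤ Module.finrank ℝ ↥(⨆ i ∈ α, L i))
    (α α' : Finset (Fin m)) (hα : maxSet L α) (hα' : maxSet L α') (hne : α ≠ α') :
    α ∩ α' = ∅ ∧ (⨆ i ∈ α, L i) ⊓ (⨆ i ∈ α', L i) = ⊥ := by
  obtain ⟨hαc, hαm⟩ := hα
  obtain ⟨hα'c, hα'm⟩ := hα'
  have hne₁ : α.Nonempty := by
    rcases Finset.eq_empty_or_nonempty α with h | h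
    · exfalso
      rw [h] at hαc
      rw [critSet, show (⨆ i ∈ (∅:Finset (Fin m)), L i) = ⊥ by simp, finrank_bot] at hαc
      simp at hαc
    · exact h
  have hne₂ : α'.Nonempty := by
    rcases Finset.eq_empty_or_nonempty α' with h | h
    · exfalso
      rw [h] at hα'c
      rw [critSet, show (⨆ i ∈ (∅:Finset (Fin m)), L i) = ⊥ by simp, finrank_bot] at hα'c
      simp at hα'c
    · exact h
  have hsup : (⨆ i ∈ (α ∪ α'), L i) = (⨆ i ∈ α, L i) ⊔ (⨆ i ∈ α', L i) := by
    simp [Finset.mem_union, iSup_or, iSup_sup_eq]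
  have hdim := Submodule.finrank_sup_add_finrank_inf_eq (⨆ i ∈ α, L i) (⨆ i ∈ α', L i)
  have hcard := Finset.card_union_add_card_inter α α'
  have hge := hcrit (α ∪ α') (hne₁.mono Finset.subset_union_left)
  rw [hsup] at hge
  unfold critSet at hαc hα'c
  have hinter : α ∩ α' = ∅ := by
    by_contra h
    have hne3 : (α ∩ α').Nonempty := Finset.nonempty_iff_ne_empty.mpr h
    have hle : (⨆ i ∈ (α ∩ α'), L i) ≤ (⨆ i ∈ α, L i) ⊓ (⨆ i ∈ α', L i) := by
      refine le_inf ?_ ?_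
      · exact biSup_mono (fun i hi => Finset.mem_of_mem_inter_left hi)
      · exact biSup_mono (fun i hi => Finset.mem_of_mem_inter_right hi)
    have hmono := Submodule.finrank_mono hle
    have hgeinter := hcrit _ hne3
    have hcu : critSet L (α ∪ α') := by
      unfold critSet; rw [hsup]; omega
    have h1 : ¬ α ⊂ α ∪ α' := hαm _ hcu
    have h2 : ¬ α' ⊂ α ∪ α' := hα'm _ hcu
    have e1 : α ∪ α' = α := by
      by_contra he
      exact h1 ⟨Finset.subset_union_left, fun hsub => he (le_antisymm hsub Finset.subset_union_left)⟩
    have e2 : α ∪ α' = α' := by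
      by_contra he
      exact h2 ⟨Finset.subset_union_right, fun hsub => he (le_antisymm hsub Finset.subset_union_right)⟩
    exact hne (e1 ▸ e2)
  refine ⟨hinter, ?_⟩
  by_contra hbot
  have hpos : 1 ≤ Module.finrank ℝ ↥((⨆ i ∈ α, L i) ⊓ (⨆ i ∈ α', L i)) := by
    rw [Nat.one_le_iff_ne_zero]
    intro h0
    exact hbot (Submodule.finrank_eq_zero.mp h0)
  have hcardinter : (α ∩ α').card = 0 := by rw [hinter]; simp
  have hcu : critSet L (α ∪ α') := by
    unfold critSet; rw [hsup]; omega
  obtain ⟨x, hx⟩ := hne₂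
  have hxα : x ∉ α := by
    intro hxa
    have : x ∈ α ∩ α' := Finset.mem_inter.mpr ⟨hxa, hx⟩
    rw [hinter] at this; exact absurd this (Finset.notMem_empty x)
  exact hαm _ hcu ⟨Finset.subset_union_left,
    fun hsub => hxα (hsub (Finset.mem_union_right _ hx))⟩
end

section
/- Let V be a finite-dimensional real vector space and L_1, …, L_m subspaces with dim L_α ≥ |α| + 1 for all nonempty α ⊆ {1,…,m} (where L_α := Σ_{i∈α} L_i). If α is a critical set (dim L_α = |α| + 1) and β ⊆ {1,…,m} is arbitrary, then L_β ⊆ L_α if and only if β ⊆ α. -/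
/-- For a critical collection of subspaces and a critical set `α`, a subcollection
spans inside `L_α` exactly when its index set is contained in `α`. -/
theorem stmt3 {V : Type*} [AddCommGroup V] [Module ℝ V] [FiniteDimensional ℝ V]
    {m : ℕ} (L : Fin m → Submodule ℝ V)
    (hcrit : ∀ γ : Finset (Fin m), γ.Nonempty →
      γ.card + 1 ≤ Module.finrank ℝ ↥(⨆ i ∈ γ, L i))
    (α : Finset (Fin m))
    (hα : Module.finrank ℝ ↥(⨆ i ∈ α, L i) = α.card + 1)
    (β : Finset (Fin m)) :
    (⨆ i ∈ β, L i) ≤ (⨆ i ∈ α, L i) ↔ β ⊆ α := by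
  constructor
  · intro hle
    by_contra hsub
    obtain ⟨j, hjβ, hjα⟩ := Finset.not_subset.mp hsub
    have hLj : L j ≤ ⨆ i ∈ α, L i :=
      le_trans (le_iSup₂ (f := fun i (_ : i ∈ β) => L i) j hjβ) hle
    have heq : (⨆ i ∈ insert j α, L i) = ⨆ i ∈ α, L i := by
      apply le_antisymm
      · apply iSup₂_le
        intro i hi
        rcases Finset.mem_insert.mp hi with h | h
        · exact h ▸ hLj
        · exact le_iSup₂ (f := fun i (_ : i ∈ α) => L i) i h
      · apply iSup₂_le
        intro i hi
        exact le_iSup₂ (f := fun i (_ : i ∈ insert j α) => L i) i (Finset.mem_insert_of_mem hi)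
    have hc := hcrit (insert j α) ⟨j, Finset.mem_insert_self j α⟩
    rw [heq, hα, Finset.card_insert_of_notMem hjα] at hc
    omega
  · intro hsub
    apply iSup₂_le
    intro i hi
    exact le_iSup₂ (f := fun i (_ : i ∈ α) => L i) i (hsub hi)
end

section
/- Let V be a finite-dimensional real vector space and let L_1, …, L_m be subspaces of V such that dim L_α ≥ |α| for every α ⊆ {1,…,m}, where L_α := Σ_{i∈α} L_i. Call α subcritical if dim L_α = |α|. If α and α' are subcritical sets, then α ∪ α' is a subcritical set. Consequently, there is a unique maximal subcritical set η containing every subcritical set. -/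
/-- `α` is a subcritical set for the collection `L` of subspaces. -/
def subcritSet {V : Type*} [AddCommGroup V] [Module ℝ V] {m : ℕ}
    (L : Fin m → Submodule ℝ V) (α : Finset (Fin m)) : Prop :=
  Module.finrank ℝ ↥(⨆ i ∈ α, L i) = α.card

/-- For a subcritical collection of subspaces (`dim L_α ≥ |α|` for every `α`), the union
of two subcritical sets is subcritical; consequently there is a unique maximal
subcritical set containing every subcritical set. -/
theorem stmt4 {V : Type*} [AddCommGroup V] [Module ℝ V] [FiniteDimensional ℝ V]
    {m : ℕ} (L : Fin m → Submodule ℝ V)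
    (hsub : ∀ α : Finset (Fin m),
      α.card ≤ Module.finrank ℝ ↥(⨆ i ∈ α, L i)) :
    (∀ α α' : Finset (Fin m), subcritSet L α → subcritSet L α' →
      subcritSet L (α ∪ α')) ∧
    ∃ η : Finset (Fin m), subcritSet L η ∧
      ∀ α : Finset (Fin m), subcritSet L α → α ⊆ η := by
  classical
  have hunion : ∀ α α' : Finset (Fin m), subcritSet L α → subcritSet L α' →
      subcritSet L (α ∪ α') := by
    intro α α' hα hα'
    have hsupeq : (⨆ i ∈ α ∪ α', L i) = (⨆ i ∈ α, L i) ⊔ (⨆ i ∈ α', L i) := by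
      simp [Finset.mem_union, iSup_or, iSup_sup_eq]
    have hle : (⨆ i ∈ α ∩ α', L i) ≤ (⨆ i ∈ α, L i) ⊓ (⨆ i ∈ α', L i) := by
      refine le_inf ?_ ?_ <;>
        exact iSup₂_le fun i hi => le_iSup₂_of_le i (by
          simp only [Finset.mem_inter] at hi; tauto) le_rfl
    have hdim := Submodule.finrank_sup_add_finrank_inf_eq
      (⨆ i ∈ α, L i) (⨆ i ∈ α', L i)
    have hmono := Submodule.finrank_mono hle
    have hcard := Finset.card_union_add_card_inter α α'
    have h1 : Module.finrank ℝ ↥(⨆ i ∈ α ∪ α', L i) ≤ (α ∪ α').card := by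
      have h2 := hsub (α ∩ α')
      rw [hsupeq]
      unfold subcritSet at hα hα'
      omega
    exact le_antisymm h1 (hsub _)
  refine ⟨hunion, ?_⟩
  refine ⟨((Finset.univ : Finset (Finset (Fin m))).filter (subcritSet L)).sup id, ?_, ?_⟩
  · apply Finset.sup_induction
    · show Module.finrank ℝ ↥(⨆ i ∈ (⊥ : Finset (Fin m)), L i) = _
      simp
    · exact fun a ha b hb => hunion a b ha hb
    · intro t ht
      simpa using (Finset.mem_filter.mp ht).2
  · intro α hα
    exact Finset.le_sup (f := id) (Finset.mem_filter.mpr ⟨Finset.mem_univ _, hα⟩)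
end

section
/- Let V be a finite-dimensional real inner-product space and L_1, …, L_m subspaces with dim L_α ≥ |α| for all α ⊆ {1,…,m} (L_α := Σ_{i∈α} L_i). Let η be the union of all subcritical sets (sets α with dim L_α = |α|), and let P denote orthogonal projection onto the orthogonal complement of L_η. Then for every nonempty α ⊆ {1,…,m} \ η, one has dim(Σ_{i∈α} P(L_i)) ≥ |α| + 1. -/
/-!
Subcritical sets are closed under union by the submodularity of dimension,
`dim (A + B) + dim (A ∩ B) = dim A + dim B`, so `η` is subcritical. For a nonempty `α`
disjoint from `η`, the set `α ∪ η` is then not subcritical, so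
`dim L_{α ∪ η} ≥ |α| + |η| + 1`. The projection `P` has kernel `L_η ≤ L_{α ∪ η}` and maps
`L_{α ∪ η}` onto `Σ_{i ∈ α} P(L_i)`, so rank–nullity gives the extra dimension.
-/

open Module Submodule

namespace Submodule

variable {K V W : Type*} [DivisionRing K] [AddCommGroup V] [Module K V] [AddCommGroup W]
  [Module K W]

theorem finrank_map_add_finrank_ker_of_ker_le (f : V →ₗ[K] W) {U : Submodule K V}
    [FiniteDimensional K U] (h : LinearMap.ker f ≤ U) :
    finrank K (U.map f) + finrank K (LinearMap.ker f) = finrank K U := by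
  rw [← LinearMap.range_domRestrict, ← LinearMap.finrank_range_add_finrank_ker (f.domRestrict U),
    LinearMap.ker_domRestrict, (comapSubtypeEquivOfLe h).finrank_eq]

theorem map_biSup_union_of_le_ker {ι : Type*} [DecidableEq ι] (L : ι → Submodule K V)
    (f : V →ₗ[K] W) (s t : Finset ι) (h : ⨆ j ∈ t, L j ≤ LinearMap.ker f) :
    (⨆ i ∈ s ∪ t, L i).map f = ⨆ i ∈ s, (L i).map f := by
  rw [Finset.iSup_union, map_sup, LinearMap.le_ker_iff_map.1 h, sup_bot_eq]
  simp only [map_iSup]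

end Submodule

section Subcritical

variable {K V ι : Type*} [DivisionRing K] [AddCommGroup V] [Module K V]

def IsSubcritical (L : ι → Submodule K V) (α : Finset ι) : Prop :=
  finrank K ↥(⨆ i ∈ α, L i) = α.card

variable {L : ι → Submodule K V}

theorem isSubcritical_empty : IsSubcritical L ∅ := by
  rw [IsSubcritical, show ⨆ i ∈ (∅ : Finset ι), L i = ⊥ by simp, finrank_bot, Finset.card_empty]

variable [FiniteDimensional K V] [DecidableEq ι]
  (hsub : ∀ α : Finset ι, α.card ≤ finrank K ↥(⨆ i ∈ α, L i))
include hsub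

theorem IsSubcritical.union {α β : Finset ι} (hα : IsSubcritical L α)
    (hβ : IsSubcritical L β) : IsSubcritical L (α ∪ β) := by
  refine le_antisymm ?_ (hsub _)
  have hinter : (α ∩ β).card ≤ finrank K ↥((⨆ i ∈ α, L i) ⊓ ⨆ i ∈ β, L i) :=
    (hsub _).trans <| finrank_mono <| le_inf
      (biSup_mono fun _ => Finset.mem_of_mem_inter_left)
      (biSup_mono fun _ => Finset.mem_of_mem_inter_right)
  have hdim := finrank_sup_add_finrank_inf_eq (⨆ i ∈ α, L i) (⨆ i ∈ β, L i)
  have hcard := Finset.card_union_add_card_inter α β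
  rw [IsSubcritical] at hα hβ
  rw [Finset.iSup_union]
  omega

theorem isSubcritical_sup {κ : Type*} (s : Finset κ) (g : κ → Finset ι)
    (hg : ∀ k ∈ s, IsSubcritical L (g k)) : IsSubcritical L (s.sup g) :=
  Finset.sup_induction isSubcritical_empty (fun _ h₁ _ h₂ => h₁.union hsub h₂) hg

theorem isSubcritical_of_forall_mem_iff {η : Finset ι}
    (hη : ∀ i, i ∈ η ↔ ∃ α, IsSubcritical L α ∧ i ∈ α) : IsSubcritical L η := by
  choose! g hg using fun i (hi : i ∈ η) => (hη i).1 hi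
  convert isSubcritical_sup hsub η g fun i hi => (hg i hi).1
  ext i
  simp only [Finset.mem_sup]
  exact ⟨fun hi => ⟨i, hi, (hg i hi).2⟩,
    fun ⟨j, hj, hij⟩ => (hη i).2 ⟨g j, (hg j hj).1, hij⟩⟩

end Subcritical

/-- Let `L₁,…,L_m` be subspaces of a finite-dimensional real inner product space with
`dim L_α ≥ |α|` for every `α`. Let `η` be the union of all subcritical sets
(`α` with `dim L_α = |α|`), and let `P` be the orthogonal projection onto `(L_η)ᗮ`.
Then the projected collection is critical: for every nonempty `α ⊆ {1,…,m} \ η`,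
`dim (Σ_{i∈α} P(L_i)) ≥ |α| + 1`. -/
theorem stmt5 {V : Type*} [NormedAddCommGroup V] [InnerProductSpace ℝ V]
    [FiniteDimensional ℝ V] {m : ℕ} (L : Fin m → Submodule ℝ V)
    (hsub : ∀ α : Finset (Fin m),
      α.card ≤ Module.finrank ℝ ↥(⨆ i ∈ α, L i))
    (η : Finset (Fin m))
    (hη : ∀ i, i ∈ η ↔ ∃ α : Finset (Fin m),
      Module.finrank ℝ ↥(⨆ j ∈ α, L j) = α.card ∧ i ∈ α) :
    ∀ α : Finset (Fin m), α.Nonempty → (∀ i ∈ α, i ∉ η) →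
      α.card + 1 ≤ Module.finrank ℝ
        ↥(⨆ i ∈ α, (L i).map
            (((⨆ j ∈ η, L j)ᗮ).subtypeL.comp
              (Submodule.orthogonalProjection (⨆ j ∈ η, L j)ᗮ)).toLinearMap) := by
  intro α ⟨a, ha⟩ hαη
  set P := (⨆ j ∈ η, L j)ᗮ.starProjection.toLinearMap
  have hker : LinearMap.ker P = ⨆ j ∈ η, L j := by simp [P]
  have hη_sub : IsSubcritical L η := isSubcritical_of_forall_mem_iff hsub hη
  have hαη_not_sub : ¬IsSubcritical L (α ∪ η) := fun h =>
    hαη a ha ((hη a).2 ⟨α ∪ η, h, Finset.mem_union_left η ha⟩)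
  have hαη_dim : (α ∪ η).card < finrank ℝ ↥(⨆ i ∈ α ∪ η, L i) :=
    (hsub _).lt_of_ne (Ne.symm hαη_not_sub)
  have hrank := finrank_map_add_finrank_ker_of_ker_le P (U := ⨆ i ∈ α ∪ η, L i)
    (by rw [hker, Finset.iSup_union]; exact le_sup_right)
  change _ ≤ finrank ℝ ↥(⨆ i ∈ α, (L i).map P)
  rw [← map_biSup_union_of_le_ker L P α η hker.ge]
  rw [hker, hη_sub] at hrank
  rw [Finset.card_union_of_disjoint (Finset.disjoint_left.2 hαη)] at hαη_dim
  omega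
end

section
/- For any convex body C in ℝⁿ and any u, x ∈ ℝⁿ, the one-sided directional derivative of the support function h_C at u in direction x equals the support function of the face F(C,u) evaluated at x: ∇_x h_C(u) := lim_{t→0⁺} (h_C(u + t x) − h_C(u))/t = h_{F(C,u)}(x). Consequently, for convex bodies C, C', F(C + C', u) = F(C, u) + F(C', u), where + denotes Minkowski addition. -/
open scoped RealInnerProductSpace Pointwise

/-- The support function `h_K(v) = sup_{y ∈ K} ⟨y, v⟩` of a set `K`. -/
noncomputable def suppFn {V : Type*} [NormedAddCommGroup V] [InnerProductSpace ℝ V]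
    (K : Set V) (v : V) : ℝ :=
  sSup ((fun y => ⟪v, y⟫) '' K)

/-- The face `F(K, v) = {x ∈ K : ⟨v, x⟩ = h_K(v)}` of `K` with outer normal `v`. -/
def face {V : Type*} [NormedAddCommGroup V] [InnerProductSpace ℝ V]
    (K : Set V) (v : V) : Set V :=
  {x ∈ K | ⟪v, x⟫ = suppFn K v}

section Helpers
variable {V : Type*} [NormedAddCommGroup V] [InnerProductSpace ℝ V]

lemma inner_cont (v : V) : Continuous fun y : V => ⟪v, y⟫ :=
  continuous_const.inner continuous_id

lemma le_suppFn {K : Set V} (hK : IsCompact K) {z : V} (hz : z ∈ K) (v : V) :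
    ⟪v, z⟫ ≤ suppFn K v :=
  le_csSup (hK.image (inner_cont v)).bddAbove ⟨z, hz, rfl⟩

lemma suppFn_le {K : Set V} (hne : K.Nonempty) {v : V} {a : ℝ}
    (h : ∀ z ∈ K, ⟪v, z⟫ ≤ a) : suppFn K v ≤ a :=
  csSup_le (hne.image _) (by rintro _ ⟨z, hz, rfl⟩; exact h z hz)

lemma suppFn_exists_max {K : Set V} (hne : K.Nonempty) (hK : IsCompact K) (v : V) :
    ∃ y ∈ K, suppFn K v = ⟪v, y⟫ := by
  obtain ⟨y, hyK, hy⟩ := hK.exists_isMaxOn hne (inner_cont v).continuousOn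
  exact ⟨y, hyK, le_antisymm (suppFn_le hne fun z hz => hy hz) (le_suppFn hK hyK v)⟩

lemma face_subset (K : Set V) (v : V) : face K v ⊆ K := fun _ h => h.1

lemma face_nonempty {K : Set V} (hne : K.Nonempty) (hK : IsCompact K) (v : V) :
    (face K v).Nonempty := by
  obtain ⟨y, hyK, hy⟩ := suppFn_exists_max hne hK v
  exact ⟨y, hyK, hy.symm⟩

lemma face_isCompact {K : Set V} (hK : IsCompact K) (v : V) :
    IsCompact (face K v) :=
  hK.inter_right (isClosed_eq (inner_cont v) continuous_const)

lemma suppFn_add {K K' : Set V} (hne : K.Nonempty) (hK : IsCompact K)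
    (hne' : K'.Nonempty) (hK' : IsCompact K') (v : V) :
    suppFn (K + K') v = suppFn K v + suppFn K' v := by
  apply le_antisymm
  · apply suppFn_le (hne.add hne')
    rintro z hz
    rw [Set.mem_add] at hz
    obtain ⟨a, ha, b, hb, rfl⟩ := hz
    rw [inner_add_right]
    exact add_le_add (le_suppFn hK ha v) (le_suppFn hK' hb v)
  · obtain ⟨y, hy, hyeq⟩ := suppFn_exists_max hne hK v
    obtain ⟨y', hy', hyeq'⟩ := suppFn_exists_max hne' hK' v
    have := le_suppFn (hK.add hK') (Set.add_mem_add hy hy') v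
    rw [inner_add_right] at this
    linarith

end Helpers

/-- For convex bodies `C, C'` in `ℝⁿ` and `u, x ∈ ℝⁿ`, the one-sided directional
derivative of the support function `h_C` at `u` in direction `x` equals
`h_{F(C,u)}(x)`, and `F(C + C', u) = F(C, u) + F(C', u)` (Minkowski addition). -/
theorem stmt8 {n : ℕ} (C C' : Set (EuclideanSpace ℝ (Fin n)))
    (hne : C.Nonempty) (hcomp : IsCompact C) (hconv : Convex ℝ C)
    (hne' : C'.Nonempty) (hcomp' : IsCompact C') (hconv' : Convex ℝ C')
    (u x : EuclideanSpace ℝ (Fin n)) :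
    Filter.Tendsto (fun t : ℝ => (suppFn C (u + t • x) - suppFn C u) / t)
      (nhdsWithin 0 (Set.Ioi 0)) (nhds (suppFn (face C u) x)) ∧
    face (C + C') u = face C u + face C' u := by
  constructor
  · -- Part 1 : directional derivative
    have hFc : IsCompact (face C u) := face_isCompact hcomp u
    have hFne : (face C u).Nonempty := face_nonempty hne hcomp u
    set L := suppFn (face C u) x with hL
    set h := suppFn C u with hh
    have hlow : ∀ t : ℝ, 0 < t → L ≤ (suppFn C (u + t • x) - h) / t := by
      intro t ht
      apply suppFn_le hFne
      intro z hz
      rw [le_div_iff₀ ht]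
      have h1 : ⟪u + t • x, z⟫ ≤ suppFn C (u + t • x) :=
        le_suppFn hcomp (face_subset C u hz) _
      have h2 : ⟪u, z⟫ = h := hz.2
      rw [inner_add_left, real_inner_smul_left] at h1
      nlinarith [real_inner_comm x z]
    rw [Metric.tendsto_nhds]
    intro ε hε
    have hupper : ∀ᶠ t in nhdsWithin 0 (Set.Ioi 0),
        (suppFn C (u + t • x) - h) / t < L + ε := by
      by_contra hcon
      rw [Filter.not_eventually] at hcon
      have hcon2 : ∃ᶠ t in nhdsWithin 0 (Set.Ioi 0),
          t ∈ Set.Ioi (0:ℝ) ∧ L + ε ≤ (suppFn C (u + t • x) - h) / t := by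
        apply Filter.Frequently.mp hcon
        filter_upwards [self_mem_nhdsWithin] with t ht hnot
        exact ⟨ht, not_lt.1 hnot⟩
      obtain ⟨t, htop, hprop⟩ := Filter.exists_seq_forall_of_frequently hcon2
      have hy : ∀ k : ℕ, ∃ y ∈ C, suppFn C (u + t k • x) = ⟪u + t k • x, y⟫ :=
        fun k => suppFn_exists_max hne hcomp _
      choose y hyC hyeq using hy
      obtain ⟨a, haC, φ, hφ, hya⟩ := hcomp.tendsto_subseq hyC
      have hts : Filter.Tendsto (fun k => t (φ k)) Filter.atTop (nhds 0) :=
        ((htop.comp hφ.tendsto_atTop).mono_right nhdsWithin_le_nhds)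
      have hxa : Filter.Tendsto (fun k => ⟪x, y (φ k)⟫) Filter.atTop (nhds ⟪x, a⟫) :=
        ((inner_cont x).tendsto a).comp hya
      have hua : Filter.Tendsto (fun k => ⟪u, y (φ k)⟫) Filter.atTop (nhds ⟪u, a⟫) :=
        ((inner_cont u).tendsto a).comp hya
      -- basic facts for each k
      have hpos : ∀ k, 0 < t (φ k) := fun k => (hprop (φ k)).1
      have hle : ∀ k, ⟪u, y (φ k)⟫ ≤ h := fun k => le_suppFn hcomp (hyC (φ k)) u
      have hxk : ∀ k, L + ε ≤ ⟪x, y (φ k)⟫ := by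
        intro k
        have h1 := (hprop (φ k)).2
        have h2 := hyeq (φ k)
        rw [h2, inner_add_left, real_inner_smul_left] at h1
        have h3 := hle k
        have h4 := hpos k
        rw [le_div_iff₀ h4] at h1
        nlinarith
      have hxaL : L + ε ≤ ⟪x, a⟫ := le_of_tendsto_of_tendsto' tendsto_const_nhds hxa hxk
      have huk : ∀ k, h + t (φ k) * (L - ⟪x, y (φ k)⟫) ≤ ⟪u, y (φ k)⟫ := by
        intro k
        have h1 := hlow (t (φ k)) (hpos k)
        have h2 := hyeq (φ k)
        rw [le_div_iff₀ (hpos k), h2, inner_add_left, real_inner_smul_left] at h1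
        nlinarith
      have hlim : Filter.Tendsto (fun k => h + t (φ k) * (L - ⟪x, y (φ k)⟫))
          Filter.atTop (nhds h) := by
        have : Filter.Tendsto (fun k => t (φ k) * (L - ⟪x, y (φ k)⟫))
            Filter.atTop (nhds (0 * (L - ⟪x, a⟫))) :=
          hts.mul (tendsto_const_nhds.sub hxa)
        simpa using tendsto_const_nhds.add this
      have huaeq : h ≤ ⟪u, a⟫ := le_of_tendsto_of_tendsto' hlim hua huk
      have haF : a ∈ face C u :=
        ⟨haC, le_antisymm (le_suppFn hcomp haC u) huaeq⟩
      have : ⟪x, a⟫ ≤ L := le_suppFn hFc haF x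
      linarith
    filter_upwards [hupper, self_mem_nhdsWithin] with t h1 h2
    rw [Real.dist_eq, abs_lt]
    have := hlow t h2
    constructor <;> linarith
  · -- Part 2 : faces of Minkowski sum
    have hsum : suppFn (C + C') u = suppFn C u + suppFn C' u :=
      suppFn_add hne hcomp hne' hcomp' u
    ext z
    constructor
    · rintro ⟨hzm, hz2⟩
      rw [Set.mem_add] at hzm
      obtain ⟨a, ha, b, hb, rfl⟩ := hzm
      rw [inner_add_right, hsum] at hz2
      have h1 : ⟪u, a⟫ ≤ suppFn C u := le_suppFn hcomp ha u
      have h2 : ⟪u, b⟫ ≤ suppFn C' u := le_suppFn hcomp' hb u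
      exact Set.add_mem_add ⟨ha, by linarith⟩ ⟨hb, by linarith⟩
    · intro hz
      rw [Set.mem_add] at hz
      obtain ⟨a, ⟨haC, haeq⟩, b, ⟨hbC, hbeq⟩, rfl⟩ := hz
      refine ⟨Set.add_mem_add haC hbC, ?_⟩
      rw [inner_add_right, hsum, haeq, hbeq]
end

section
/- Let α = {x, y_1, …, y_{n−1}} be a finite poset with a distinguished element x, and for i ∈ {1,…,n} let N_i be the number of order-preserving bijections σ : α → {1,…,n} with σ(x) = i. Then N_i = 0 if and only if |{y ∈ α : y < x}| > i − 1 or |{y ∈ α : y > x}| > n − i. -/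
/-!
In a linear extension the elements below `x` come before it and those above come after it,
which gives the two bounds. Conversely, if both bounds hold, grow `{y | y < x}` by adding
minimal elements to a lower set `D` of size `i - 1` that avoids `{y | x ≤ y}`; listing `D`,
then `x`, then the rest, each block in the order of a fixed linear extension of `α`, is a
linear extension with `x` in position `i`.
-/

/-- `σ` is a linear extension of the finite poset `α`: an order-preserving bijection
onto `{0,…,n−1}` (ranks taken `1`-indexed elsewhere). -/
def IsLinExt {α : Type*} [Fintype α] [PartialOrder α]
    (σ : α ≃ Fin (Fintype.card α)) : Prop :=
  ∀ y z : α, y < z → σ y < σ z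

/-- `NExt α x i` is the number of linear extensions `σ` of `α` in which the
distinguished element `x` has (1-indexed) rank `i`. -/
noncomputable def NExt (α : Type*) [Fintype α] [PartialOrder α] (x : α) (i : ℕ) : ℕ :=
  Nat.card {σ : α ≃ Fin (Fintype.card α) // IsLinExt σ ∧ (σ x : ℕ) + 1 = i}

open Finset

theorem Finset.exists_isLowerSet_subsuperset_card_eq {α : Type*} [PartialOrder α] [DecidableEq α]
    {s t : Finset α} (hs : IsLowerSet (s : Set α)) (ht : IsLowerSet (t : Set α)) (hst : s ⊆ t)
    {k : ℕ} (hsk : #s ≤ k) (hkt : k ≤ #t) :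
    ∃ u : Finset α, IsLowerSet (u : Set α) ∧ s ⊆ u ∧ u ⊆ t ∧ #u = k := by
  induction k, hsk using Nat.le_induction with
  | base => exact ⟨s, hs, subset_rfl, hst, rfl⟩
  | succ k hsk ih =>
    obtain ⟨u, hu, hsu, hut, rfl⟩ := ih (by omega)
    have hne : (t \ u).Nonempty := sdiff_nonempty.mpr fun htu => by
      have := card_le_card htu; omega
    obtain ⟨m, hm, hmin⟩ := Finset.exists_minimal hne
    obtain ⟨hmt, hmu⟩ := mem_sdiff.mp hm
    refine ⟨insert m u, ?_, hsu.trans (subset_insert m u), insert_subset hmt hut,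
      card_insert_of_notMem hmu⟩
    intro a b hba ha
    rcases mem_insert.mp ha with rfl | hau
    · rcases hba.eq_or_lt with rfl | hba
      · exact mem_insert_self _ _
      · by_contra hb
        have hbt : b ∈ t := ht hba.le hmt
        exact hba.not_ge (hmin (mem_sdiff.mpr ⟨hbt, fun h => hb (mem_insert_of_mem h)⟩) hba.le)
    · exact mem_insert_of_mem (hu hba hau)

section LinExt

variable {α : Type*} [Fintype α] [PartialOrder α]

theorem exists_isLinExt_coe_eq_card_lt {β : Type*} [LinearOrder β] {f : α → β}
    (hf : Function.Injective f) (hmono : StrictMono f) (x : α) :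
    ∃ σ : α ≃ Fin (Fintype.card α), IsLinExt σ ∧ (σ x : ℕ) = #{y | f y < f x} := by
  classical
  let rank (y : α) : Fin (Fintype.card α) :=
    ⟨#{z | f z < f y}, card_lt_univ_of_notMem (x := y) (by simp)⟩
  have rank_lt {y z : α} (h : f y < f z) : rank y < rank z := by
    refine Fin.mk_lt_mk.mpr (card_lt_card ⟨fun w hw => ?_, fun hsub => ?_⟩)
    · simp only [mem_filter, mem_univ, true_and] at hw ⊢
      exact hw.trans h
    · exact lt_irrefl _ (mem_filter.mp (hsub (mem_filter.mpr ⟨mem_univ y, h⟩))).2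
  have rank_injective : Function.Injective rank := by
    intro y z hyz
    rcases lt_trichotomy (f y) (f z) with h | h | h
    · exact absurd hyz (rank_lt h).ne
    · exact hf h
    · exact absurd hyz (rank_lt h).ne'
  refine ⟨Equiv.ofBijective rank ((Fintype.bijective_iff_injective_and_card rank).mpr
    ⟨rank_injective, (Fintype.card_fin _).symm⟩), fun y z h => rank_lt (hmono h), rfl⟩

theorem exists_isLinExt_coe_eq_of_isLowerSet [DecidableEq α] {x : α} {D : Finset α}
    (hD : IsLowerSet (D : Set α)) (hltD : ∀ y, y < x → y ∈ D) (hxD : x ∉ D) :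
    ∃ σ : α ≃ Fin (Fintype.card α), IsLinExt σ ∧ (σ x : ℕ) = #D := by
  -- sort by block (`D`, then `{x}`, then the rest), ties broken by a fixed linear extension
  let r (y : α) : ℕ := if y ∈ D then 0 else if y = x then 1 else 2
  have hr : Monotone r := fun y z hyz => by
    by_cases hz : z ∈ D
    · have hy : y ∈ D := hD hyz hz
      simp [r, hy, hz]
    by_cases hzx : z = x
    · subst hzx
      rcases hyz.eq_or_lt with rfl | hyz
      · rfl
      · simp [r, hltD y hyz]
    · simp only [r, hz, hzx, if_false]
      split_ifs <;> omega
  let f (y : α) : ℕ ×ₗ LinearExtension α := toLex (r y, toLinearExtension y)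
  have hf : Function.Injective f := fun y z h => congrArg (fun p => (ofLex p).2) h
  have hmono : StrictMono f := Prod.Lex.toLex_strictMono.comp fun y z hyz =>
    Prod.mk_lt_mk_of_le_of_lt (hr hyz.le)
      (toLinearExtension.monotone.strictMono_of_injective (fun _ _ h => h) hyz)
  obtain ⟨σ, hσ, hσx⟩ := exists_isLinExt_coe_eq_card_lt hf hmono x
  have hfx (y : α) : f y < f x ↔ y ∈ D := by
    by_cases hy : y ∈ D
    · simp [f, r, Prod.Lex.toLex_lt_toLex, hy, hxD]
    by_cases hyx : y = x
    · subst hyx; simp [hy]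
    · simp [f, r, Prod.Lex.toLex_lt_toLex, hy, hxD, hyx]
  refine ⟨σ, hσ, hσx.trans ?_⟩
  simp_rw [hfx]
  simp

end LinExt

section DecidableLT

variable {α : Type*} [Fintype α] [PartialOrder α] [DecidableLT α]

theorem IsLinExt.card_lt_le {σ : α ≃ Fin (Fintype.card α)} (hσ : IsLinExt σ) (x : α) :
    #{y | y < x} ≤ σ x :=
  calc #{y | y < x} ≤ #(Iio (σ x)) :=
        card_le_card_of_injOn σ (fun y hy => by simpa using hσ y x (by simpa using hy))
          σ.injective.injOn
    _ = σ x := Fin.card_Iio _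

theorem IsLinExt.card_gt_le {σ : α ≃ Fin (Fintype.card α)} (hσ : IsLinExt σ) (x : α) :
    #{y | x < y} ≤ Fintype.card α - 1 - σ x :=
  calc #{y | x < y} ≤ #(Ioi (σ x)) :=
        card_le_card_of_injOn σ (fun y hy => by simpa using hσ x y (by simpa using hy))
          σ.injective.injOn
    _ = Fintype.card α - 1 - σ x := Fin.card_Ioi _

theorem exists_isLowerSet_card_eq_of_bounds (x : α) {k : ℕ}
    (hlt : #{y | y < x} ≤ k) (hgt : k + #{y | x < y} < Fintype.card α) :
    ∃ D : Finset α,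
      IsLowerSet (D : Set α) ∧ (∀ y, y < x → y ∈ D) ∧ x ∉ D ∧ #D = k := by
  classical
  have hs : IsLowerSet (({y | y < x} : Finset α) : Set α) := fun a b hba ha => by
    simp only [coe_filter, mem_univ, true_and, Set.mem_ofPred_eq] at ha ⊢
    exact hba.trans_lt ha
  have ht : IsLowerSet (({y | ¬x ≤ y} : Finset α) : Set α) := fun a b hba ha => by
    simp only [coe_filter, mem_univ, true_and, Set.mem_ofPred_eq] at ha ⊢
    exact fun hxb => ha (hxb.trans hba)
  have hst : ({y | y < x} : Finset α) ⊆ ({y | ¬x ≤ y} : Finset α) := fun y hy => by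
    simp only [mem_filter, mem_univ, true_and] at hy ⊢
    exact hy.not_ge
  have hkt : k ≤ #{y | ¬x ≤ y} := by
    have hcompl : univ \ insert x ({y | x < y} : Finset α) ⊆ ({y | ¬x ≤ y} : Finset α) :=
        fun y hy => by
      simp only [mem_sdiff, mem_univ, mem_insert, mem_filter, true_and, not_or] at hy ⊢
      exact fun hxy => hxy.eq_or_lt.elim (fun h => hy.1 h.symm) hy.2
    have := card_le_card hcompl
    rw [card_univ_sdiff] at this
    have := card_insert_le x ({y | x < y} : Finset α)
    omega
  obtain ⟨D, hD, hsD, hDt, hDk⟩ := exists_isLowerSet_subsuperset_card_eq hs ht hst hlt hkt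
  refine ⟨D, hD, fun y hy => hsD (by simpa using hy), fun hxD => ?_, hDk⟩
  simpa using hDt hxD

theorem exists_isLinExt_coe_eq_iff (x : α) (k : ℕ) :
    (∃ σ : α ≃ Fin (Fintype.card α), IsLinExt σ ∧ (σ x : ℕ) = k) ↔
      #{y | y < x} ≤ k ∧ k + #{y | x < y} < Fintype.card α := by
  constructor
  · rintro ⟨σ, hσ, rfl⟩
    have := hσ.card_lt_le x
    have := hσ.card_gt_le x
    have := (σ x).isLt
    omega
  · rintro ⟨hlt, hgt⟩
    classical
    obtain ⟨D, hD, hltD, hxD, rfl⟩ := exists_isLowerSet_card_eq_of_bounds x hlt hgt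
    exact exists_isLinExt_coe_eq_of_isLowerSet hD hltD hxD

end DecidableLT

theorem NExt_eq_zero_iff (α : Type*) [Fintype α] [PartialOrder α] (x : α) (i : ℕ) :
    NExt α x i = 0 ↔
      ¬∃ σ : α ≃ Fin (Fintype.card α), IsLinExt σ ∧ (σ x : ℕ) + 1 = i := by
  rw [NExt, Finite.card_eq_zero_iff, isEmpty_subtype, not_exists]

/-- Trivial extremals: `N_i = 0` iff there are more than `i − 1` elements below `x`
or more than `n − i` elements above `x`. -/
theorem stmt11 {α : Type*} [Fintype α] [PartialOrder α] (x : α)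
    (i : ℕ) (h1 : 1 ≤ i) (h2 : i ≤ Fintype.card α) :
    NExt α x i = 0 ↔
      i - 1 < Nat.card {y : α | y < x} ∨
      Fintype.card α - i < Nat.card {y : α | x < y} := by
  classical
  obtain ⟨k, rfl⟩ : ∃ k, i = k + 1 := ⟨i - 1, by omega⟩
  rw [NExt_eq_zero_iff]
  simp only [Nat.add_right_cancel_iff, exists_isLinExt_coe_eq_iff, not_and, not_lt,
    add_tsub_cancel_right, Nat.card_eq_fintype_card, Fintype.card_ofFinset, Set.mem_ofPred_eq]
  omega
end

section
/- Let α be a finite poset of cardinality n with distinguished element x, and let N_i be the number of linear extensions σ : α → {1,…,n} with σ(x) = i. Fix i ∈ {2,…,n−1} with N_i > 0 and suppose that |{z : z < y}| > i for every y > x, and |{z : z > y}| > n − i + 1 for every y < x. Then every linear extension σ with σ(x) = i assigns the ranks i−1 and i+1 to elements incomparable to x. -/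
lemma card_below {α : Type*} [Fintype α] [PartialOrder α]
    (σ : α ≃ Fin (Fintype.card α)) (hσ : IsLinExt σ) (y : α) :
    Nat.card {z : α | z < y} ≤ (σ y : ℕ) := by
  have h1 : σ '' {z | z < y} ⊆ Set.Iio (σ y) := by
    rintro _ ⟨z, hz, rfl⟩; exact hσ z y hz
  calc Nat.card {z : α | z < y} = Nat.card (σ '' {z | z < y}) :=
        (Nat.card_image_of_injective σ.injective _).symm
    _ ≤ Nat.card (Set.Iio (σ y)) := Nat.card_mono (Set.toFinite _) h1
    _ = (σ y : ℕ) := by simp [Nat.card_eq_fintype_card]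

lemma card_above {α : Type*} [Fintype α] [PartialOrder α]
    (σ : α ≃ Fin (Fintype.card α)) (hσ : IsLinExt σ) (y : α) :
    Nat.card {z : α | y < z} ≤ Fintype.card α - 1 - (σ y : ℕ) := by
  have h1 : σ '' {z | y < z} ⊆ Set.Ioi (σ y) := by
    rintro _ ⟨z, hz, rfl⟩; exact hσ y z hz
  calc Nat.card {z : α | y < z} = Nat.card (σ '' {z | y < z}) :=
        (Nat.card_image_of_injective σ.injective _).symm
    _ ≤ Nat.card (Set.Ioi (σ y)) := Nat.card_mono (Set.toFinite _) h1
    _ = Fintype.card α - 1 - (σ y : ℕ) := by simp [Nat.card_eq_fintype_card]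

/-- If `|{z : z < y}| > i` for all `y > x` and `|{z : z > y}| > n − i + 1` for all
`y < x`, then every linear extension giving `x` rank `i` assigns the ranks `i−1` and
`i+1` to elements incomparable to `x`. -/
theorem stmt12 {α : Type*} [Fintype α] [PartialOrder α] (x : α) (i : ℕ)
    (h2 : 2 ≤ i) (hi : i ≤ Fintype.card α - 1)
    (hpos : 0 < NExt α x i)
    (hup : ∀ y : α, x < y → i < Nat.card {z : α | z < y})
    (hdown : ∀ y : α, y < x → Fintype.card α - i + 1 < Nat.card {z : α | y < z}) :
    ∀ σ : α ≃ Fin (Fintype.card α), IsLinExt σ → (σ x : ℕ) + 1 = i →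
      ∀ y : α, ((σ y : ℕ) + 1 = i - 1 ∨ (σ y : ℕ) + 1 = i + 1) →
        ¬ y ≤ x ∧ ¬ x ≤ y := by
  intro σ hσ hx y hy
  have hn : (σ x : ℕ) < Fintype.card α := (σ x).isLt
  have hxy : x ≠ y := by
    rintro rfl; omega
  rcases hy with hy | hy
  · constructor
    · intro hle
      have hlt : y < x := lt_of_le_of_ne hle (Ne.symm hxy)
      have h3 := hdown y hlt
      have h4 := card_above σ hσ y
      omega
    · intro hle
      have hlt : x < y := lt_of_le_of_ne hle hxy
      have h3 := hσ x y hlt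
      omega
  · constructor
    · intro hle
      have hlt : y < x := lt_of_le_of_ne hle (Ne.symm hxy)
      have h3 := hσ y x hlt
      omega
    · intro hle
      have hlt : x < y := lt_of_le_of_ne hle hxy
      have h3 := hup y hlt
      have h4 := card_below σ hσ y
      omega
end

section
/- Let α be a finite poset of cardinality n with distinguished element x, and let N_i count linear extensions σ with σ(x) = i. Fix i ∈ {2,…,n−1} with N_i > 0, and suppose every linear extension σ with σ(x) = i assigns ranks i−1 and i+1 to elements incomparable to x. Then N_i ≤ N_{i−1} and N_i ≤ N_{i+1}. -/
lemma swap_linext {α : Type*} [Fintype α] [PartialOrder α]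
    {σ : α ≃ Fin (Fintype.card α)} (hσ : IsLinExt σ)
    {a b : Fin (Fintype.card α)} (hab : (b : ℕ) = (a : ℕ) + 1)
    (h1 : ¬ σ.symm a ≤ σ.symm b) (h2 : ¬ σ.symm b ≤ σ.symm a) :
    IsLinExt (σ.trans (Equiv.swap a b)) := by
  intro y z hyz
  have hs : (σ y : ℕ) < (σ z : ℕ) := hσ y z hyz
  simp only [Equiv.trans_apply]
  rcases eq_or_ne (σ y) a with hya | hya
  · rcases eq_or_ne (σ z) b with hzb | hzb
    · exact absurd (le_of_lt hyz)
        (by rw [← σ.symm_apply_apply y, ← σ.symm_apply_apply z, hya, hzb]; exact h1)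
    · have hza : σ z ≠ a := by
        intro h; rw [h, hya] at hs; omega
      rw [hya, Equiv.swap_apply_left, Equiv.swap_apply_of_ne_of_ne hza hzb]
      have : (σ z : ℕ) ≠ (b : ℕ) := fun h => hzb (Fin.ext h)
      rw [hya] at hs
      exact Fin.lt_def.mpr (by omega)
  · rcases eq_or_ne (σ y) b with hyb | hyb
    · have hza : σ z ≠ a := by
        intro h; rw [h, hyb] at hs; omega
      have hzb : σ z ≠ b := by
        intro h; rw [h] at hs; omega
      rw [hyb, Equiv.swap_apply_right, Equiv.swap_apply_of_ne_of_ne hza hzb]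
      rw [hyb] at hs
      exact Fin.lt_def.mpr (by omega)
    · rw [Equiv.swap_apply_of_ne_of_ne hya hyb]
      rcases eq_or_ne (σ z) a with hza | hza
      · rw [hza, Equiv.swap_apply_left]
        rw [hza] at hs
        exact Fin.lt_def.mpr (by omega)
      · rcases eq_or_ne (σ z) b with hzb | hzb
        · rw [hzb, Equiv.swap_apply_right]
          have hy : (σ y : ℕ) ≠ (a : ℕ) := fun h => hya (Fin.ext h)
          rw [hzb] at hs
          exact Fin.lt_def.mpr (by omega)
        · rw [Equiv.swap_apply_of_ne_of_ne hza hzb]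
          exact hσ y z hyz

/-- If every linear extension giving `x` rank `i` assigns the ranks `i−1` and `i+1` to
elements incomparable to `x`, then `N_i ≤ N_{i−1}` and `N_i ≤ N_{i+1}`. -/
theorem stmt13 {α : Type*} [Fintype α] [PartialOrder α] (x : α) (i : ℕ)
    (h2 : 2 ≤ i) (hi : i ≤ Fintype.card α - 1)
    (hpos : 0 < NExt α x i)
    (hinc : ∀ σ : α ≃ Fin (Fintype.card α), IsLinExt σ → (σ x : ℕ) + 1 = i →
      ∀ y : α, ((σ y : ℕ) + 1 = i - 1 ∨ (σ y : ℕ) + 1 = i + 1) →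
        ¬ y ≤ x ∧ ¬ x ≤ y) :
    NExt α x i ≤ NExt α x (i - 1) ∧ NExt α x i ≤ NExt α x (i + 1) := by
  set n := Fintype.card α with hn
  have hne : Nonempty {σ : α ≃ Fin n // IsLinExt σ ∧ (σ x : ℕ) + 1 = i} :=
    (Nat.card_pos_iff.mp hpos).1
  obtain ⟨σ0, _, hσ0x⟩ := hne
  have hilt : i ≤ n := by have := (σ0 x).isLt; omega
  have hiltn : i < n := by omega
  set a : Fin n := ⟨i - 1, by omega⟩ with ha
  set b : Fin n := ⟨i, by omega⟩ with hb
  set c : Fin n := ⟨i - 2, by omega⟩ with hc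
  constructor
  · -- swap with c (rank i-1)
    have key : ∀ σ : {σ : α ≃ Fin n // IsLinExt σ ∧ (σ x : ℕ) + 1 = i},
        IsLinExt (σ.1.trans (Equiv.swap c a)) ∧
          (((σ.1.trans (Equiv.swap c a)) x : ℕ)) + 1 = i - 1 := by
      rintro ⟨σ, hσ, hσx⟩
      have hxa : σ x = a := Fin.ext (by simp [ha]; omega)
      have hrank : (σ (σ.symm c) : ℕ) + 1 = i - 1 ∨ (σ (σ.symm c) : ℕ) + 1 = i + 1 := by
        left; simp [hc]; omega
      have hinc' := hinc σ hσ hσx (σ.symm c) hrank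
      have hx : σ.symm a = x := by rw [← hxa]; exact σ.symm_apply_apply x
      refine ⟨swap_linext hσ (by simp [ha, hc]; omega) ?_ ?_, ?_⟩
      · rw [hx]; exact hinc'.1
      · rw [hx]; exact hinc'.2
      · simp [Equiv.trans_apply, hxa, Equiv.swap_apply_right, hc]; omega
    have hinj : Function.Injective
        (fun σ : {σ : α ≃ Fin n // IsLinExt σ ∧ (σ x : ℕ) + 1 = i} =>
          (⟨σ.1.trans (Equiv.swap c a), (key σ).1, (key σ).2⟩ :
            {σ : α ≃ Fin n // IsLinExt σ ∧ (σ x : ℕ) + 1 = i - 1})) := by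
      intro σ τ h
      have h' : σ.1.trans (Equiv.swap c a) = τ.1.trans (Equiv.swap c a) :=
        congrArg Subtype.val h
      apply Subtype.ext; apply Equiv.ext; intro y
      have := congrArg (fun e => (Equiv.swap c a).symm (e y)) h'
      simpa using this
    exact Nat.card_le_card_of_injective _ hinj
  · -- swap with b (rank i+1)
    have key : ∀ σ : {σ : α ≃ Fin n // IsLinExt σ ∧ (σ x : ℕ) + 1 = i},
        IsLinExt (σ.1.trans (Equiv.swap a b)) ∧
          (((σ.1.trans (Equiv.swap a b)) x : ℕ)) + 1 = i + 1 := by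
      rintro ⟨σ, hσ, hσx⟩
      have hxa : σ x = a := Fin.ext (by simp [ha]; omega)
      have hrank : (σ (σ.symm b) : ℕ) + 1 = i - 1 ∨ (σ (σ.symm b) : ℕ) + 1 = i + 1 := by
        right; simp [hb]
      have hinc' := hinc σ hσ hσx (σ.symm b) hrank
      have hx : σ.symm a = x := by rw [← hxa]; exact σ.symm_apply_apply x
      refine ⟨swap_linext hσ (by simp [ha, hb]; omega) ?_ ?_, ?_⟩
      · rw [hx]; exact hinc'.2
      · rw [hx]; exact hinc'.1
      · simp [Equiv.trans_apply, hxa, Equiv.swap_apply_left, hb]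
    have hinj : Function.Injective
        (fun σ : {σ : α ≃ Fin n // IsLinExt σ ∧ (σ x : ℕ) + 1 = i} =>
          (⟨σ.1.trans (Equiv.swap a b), (key σ).1, (key σ).2⟩ :
            {σ : α ≃ Fin n // IsLinExt σ ∧ (σ x : ℕ) + 1 = i + 1})) := by
      intro σ τ h
      have h' : σ.1.trans (Equiv.swap a b) = τ.1.trans (Equiv.swap a b) :=
        congrArg Subtype.val h
      apply Subtype.ext; apply Equiv.ext; intro y
      have := congrArg (fun e => (Equiv.swap a b).symm (e y)) h'
      simpa using this
    exact Nat.card_le_card_of_injective _ hinj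
end
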